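/- arXiv:2303.01101 — 4 statements merged into one kernel-verified Lean document; each statement's English description precedes it below -/
import Mathlib

section
/- Let {βₖ} be nonincreasing with 0 ≤ βₖ ≤ 1 and Σₖ βₖ² < ∞, and let 0 ≤ η < 1. Then Σₖ₌₀^∞ βₖ Σₗ₌₀^{k-1} η^{k-ℓ} βₗ < ∞. -/
/-- For a nonincreasing sequence `{β_k} ⊆ [0,1]` with `∑ β_k² < ∞` and `η ∈ [0,1)`,
the double series `∑_k β_k ∑_{ℓ=0}^{k-1} η^{k-ℓ} β_ℓ` is finite. -/
theorem stmt_7 (β : ℕ → ℝ) (η : ℝ)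
    (hβ0 : ∀ k, 0 ≤ β k) (hβ1 : ∀ k, β k ≤ 1)
    (hmono : ∀ k, β (k + 1) ≤ β k)
    (hβ2 : Summable (fun k => (β k) ^ 2))
    (hη0 : 0 ≤ η) (hη1 : η < 1) :
    Summable (fun k => β k * ∑ l ∈ Finset.range k, η ^ (k - l) * β l) := by
  have hanti : Antitone β := antitone_nat_of_succ_le hmono
  set f : ℕ → ℝ := fun l => β l ^ 2 with hf_def
  set g : ℕ → ℝ := fun n => if n = 0 then 0 else η ^ n with hg_def
  have hf : Summable fun x => ‖f x‖ :=
    hβ2.congr fun x => by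
      simp [hf_def, Real.norm_eq_abs, abs_of_nonneg (sq_nonneg (β x))]
  have hgle : ∀ n, ‖g n‖ ≤ η ^ n := by
    intro n
    simp only [hg_def, Real.norm_eq_abs]
    split
    · simp [pow_nonneg hη0]
    · rw [abs_of_nonneg (pow_nonneg hη0 n)]
  have hg : Summable fun x => ‖g x‖ :=
    Summable.of_nonneg_of_le (fun n => norm_nonneg (g n)) hgle
      (summable_geometric_of_lt_one hη0 hη1)
  have h := summable_norm_sum_mul_range_of_summable_norm hf hg
  apply Summable.of_nonneg_of_le _ _ h
  · intro k
    exact mul_nonneg (hβ0 k) (Finset.sum_nonneg fun l _ =>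
      mul_nonneg (pow_nonneg hη0 _) (hβ0 l))
  · intro n
    have key : ∑ k ∈ Finset.range (n + 1), f k * g (n - k)
        = ∑ l ∈ Finset.range n, η ^ (n - l) * β l ^ 2 := by
      rw [Finset.sum_range_succ]
      simp only [hg_def, Nat.sub_self, if_pos rfl, mul_zero, add_zero]
      apply Finset.sum_congr rfl
      intro l hl
      have hl' : l < n := Finset.mem_range.mp hl
      rw [if_neg (Nat.sub_ne_zero_of_lt hl')]
      ring
    rw [Real.norm_eq_abs, key, abs_of_nonneg (Finset.sum_nonneg fun l _ =>
      mul_nonneg (pow_nonneg hη0 _) (sq_nonneg _))]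
    rw [Finset.mul_sum]
    apply Finset.sum_le_sum
    intro l hl
    have hln : l ≤ n := le_of_lt (Finset.mem_range.mp hl)
    have : β n ≤ β l := hanti hln
    have h1 : β n * (η ^ (n - l) * β l) ≤ β l * (η ^ (n - l) * β l) :=
      mul_le_mul_of_nonneg_right this (mul_nonneg (pow_nonneg hη0 _) (hβ0 l))
    calc β n * (η ^ (n - l) * β l) ≤ β l * (η ^ (n - l) * β l) := h1
      _ = η ^ (n - l) * β l ^ 2 := by ring
end

section
/- Let h(x, ·) : ℝⁿ → ℝⁿ be an η-contraction for each x ∈ X (with common η < 1), with fixed point y*(x), and suppose x ↦ y*(x) is Lipschitz with constant L_W. Consider the coupled iteration yₖ₊₁ = h(xₖ₊₁, yₖ) along a sequence {xₖ} ⊂ X with ‖xₖ₊₁ - xₖ‖ ≤ βₖ B for constants B > 0. Then ‖yₖ - y*(xₖ)‖ ≤ ηᵏ ‖y₀ - y*(x₀)‖ + L_W B Σₗ₌₀^{k-1} η^{k-ℓ} βₗ. -/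
/-- Tracking error of the coupled iteration `y_{k+1} = h(x_{k+1}, y_k)`:
`‖y_k - y*(x_k)‖ ≤ η^k ‖y_0 - y*(x_0)‖ + L_W B ∑_{ℓ=0}^{k-1} η^{k-ℓ} β_ℓ`. -/
theorem stmt_10 (m n : ℕ) (X : Set (EuclideanSpace ℝ (Fin m)))
    (h : EuclideanSpace ℝ (Fin m) → EuclideanSpace ℝ (Fin n) → EuclideanSpace ℝ (Fin n))
    (ystar : EuclideanSpace ℝ (Fin m) → EuclideanSpace ℝ (Fin n))
    (η LW B : ℝ) (hη0 : 0 ≤ η) (hη1 : η < 1) (hB : 0 < B) (hLW : 0 ≤ LW)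
    (hcontr : ∀ x ∈ X, ∀ y y', ‖h x y - h x y'‖ ≤ η * ‖y - y'‖)
    (hfix : ∀ x ∈ X, h x (ystar x) = ystar x)
    (hLip : ∀ x ∈ X, ∀ x' ∈ X, ‖ystar x - ystar x'‖ ≤ LW * ‖x - x'‖)
    (x : ℕ → EuclideanSpace ℝ (Fin m)) (hxX : ∀ k, x k ∈ X)
    (β : ℕ → ℝ) (hβ : ∀ k, ‖x (k + 1) - x k‖ ≤ β k * B)
    (y : ℕ → EuclideanSpace ℝ (Fin n))
    (hiter : ∀ k, y (k + 1) = h (x (k + 1)) (y k)) :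
    ∀ k, ‖y k - ystar (x k)‖ ≤
      η ^ k * ‖y 0 - ystar (x 0)‖ + LW * B * ∑ l ∈ Finset.range k, η ^ (k - l) * β l := by
  intro k
  induction k with
  | zero => simp
  | succ k ih =>
    have hX := hxX (k + 1)
    have step1 : ‖y (k + 1) - ystar (x (k + 1))‖ ≤ η * ‖y k - ystar (x (k + 1))‖ := by
      calc ‖y (k + 1) - ystar (x (k + 1))‖
          = ‖h (x (k + 1)) (y k) - h (x (k + 1)) (ystar (x (k + 1)))‖ := by
            rw [hiter k, hfix _ hX]
        _ ≤ η * ‖y k - ystar (x (k + 1))‖ := hcontr _ hX _ _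
    have step2 : ‖y k - ystar (x (k + 1))‖ ≤ ‖y k - ystar (x k)‖ + LW * (β k * B) := by
      calc ‖y k - ystar (x (k + 1))‖
          ≤ ‖y k - ystar (x k)‖ + ‖ystar (x k) - ystar (x (k + 1))‖ := by
            have := norm_sub_le (y k - ystar (x k)) (ystar (x (k+1)) - ystar (x k))
            have e : y k - ystar (x k) - (ystar (x (k+1)) - ystar (x k)) = y k - ystar (x (k+1)) := by abel
            rw [e, norm_sub_rev (ystar (x (k+1)))] at this
            exact this
        _ ≤ ‖y k - ystar (x k)‖ + LW * (β k * B) := by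
            have h1 : ‖ystar (x k) - ystar (x (k + 1))‖ ≤ LW * ‖x k - x (k + 1)‖ :=
              hLip _ (hxX k) _ hX
            have h2 : ‖x k - x (k + 1)‖ ≤ β k * B := by rw [norm_sub_rev]; exact hβ k
            have h3 := h1.trans (mul_le_mul_of_nonneg_left h2 hLW)
            linarith
    have key : ‖y (k + 1) - ystar (x (k + 1))‖ ≤
        η * (η ^ k * ‖y 0 - ystar (x 0)‖ + LW * B * ∑ l ∈ Finset.range k, η ^ (k - l) * β l)
          + η * (LW * (β k * B)) := by
      calc ‖y (k + 1) - ystar (x (k + 1))‖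
          ≤ η * (‖y k - ystar (x k)‖ + LW * (β k * B)) :=
            step1.trans (by gcongr)
        _ = η * ‖y k - ystar (x k)‖ + η * (LW * (β k * B)) := by ring
        _ ≤ _ := by gcongr
    refine key.trans (le_of_eq ?_)
    rw [Finset.sum_range_succ]
    have hsum : ∑ l ∈ Finset.range k, η ^ (k + 1 - l) * β l
        = η * ∑ l ∈ Finset.range k, η ^ (k - l) * β l := by
      rw [Finset.mul_sum]
      refine Finset.sum_congr rfl fun l hl => ?_
      have hlk : l < k := Finset.mem_range.mp hl
      have : k + 1 - l = (k - l) + 1 := by omega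
      rw [this, pow_succ]
      ring
    rw [mul_add, hsum]
    have : k + 1 - k = 1 := by omega
    rw [this]
    ring
end

section
/- Let T : ℝᵐ → ℝᵐ be nonexpansive with Fix T ≠ ∅, and consider the inexact Krasnosel'skii–Mann iteration xₖ₊₁ = xₖ + βₖ(T(xₖ) + eₖ - xₖ) with βₖ ∈ [0,1], Σₖ βₖ(1-βₖ) = ∞ and Σₖ βₖ‖eₖ‖ < ∞. Then {xₖ} converges to a fixed point of T. -/
open Filter Topology

/-- A nonnegative sequence with `a (k+1) ≤ a k + ε k`, `ε` summable nonnegative, converges. -/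
lemma km_aux_conv (a ε : ℕ → ℝ) (ha0 : ∀ k, 0 ≤ a k) (hε0 : ∀ k, 0 ≤ ε k)
    (hε : Summable ε) (hrec : ∀ k, a (k + 1) ≤ a k + ε k) :
    ∃ L, Tendsto a atTop (𝓝 L) := by
  set t : ℕ → ℝ := fun k => ∑' j, ε (j + k) with ht
  have htail : ∀ k, Summable fun j => ε (j + k) := fun k => (summable_nat_add_iff k).mpr hε
  have hsplit : ∀ k, t k = ε k + t (k + 1) := by
    intro k
    have := Summable.tsum_eq_zero_add (htail k)
    rw [ht]
    simp only
    rw [this]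
    congr 1
    · simp
    · apply tsum_congr; intro j; congr 1; omega
  have hanti : Antitone fun k => a k + t k := by
    apply antitone_nat_of_succ_le
    intro k
    have := hrec k
    have := hsplit k
    linarith
  have hbdd : BddBelow (Set.range fun k => a k + t k) := by
    refine ⟨0, ?_⟩
    rintro _ ⟨k, rfl⟩
    have : 0 ≤ t k := tsum_nonneg fun j => hε0 _
    have := ha0 k
    simp only
    linarith
  have hconv := tendsto_atTop_ciInf hanti hbdd
  have ht0 : Tendsto t atTop (𝓝 0) := tendsto_sum_nat_add ε
  refine ⟨(⨅ i, a i + t i) - 0, ?_⟩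
  have h2 := hconv.sub ht0
  exact h2.congr (fun k => by ring)

/-- Hilbert-space convex combination identity. -/
lemma km_norm_combo {F : Type*} [NormedAddCommGroup F] [InnerProductSpace ℝ F]
    (β : ℝ) (u v : F) :
    ‖(1 - β) • u + β • v‖ ^ 2
      = (1 - β) * ‖u‖ ^ 2 + β * ‖v‖ ^ 2 - β * (1 - β) * ‖u - v‖ ^ 2 := by
  have h1 := norm_add_sq_real ((1 - β) • u) (β • v)
  have h2 := norm_sub_sq_real u v
  simp only [norm_smul, Real.norm_eq_abs, real_inner_smul_left, real_inner_smul_right,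
    mul_pow, sq_abs] at h1
  linear_combination h1 + β * (1 - β) * h2

set_option maxHeartbeats 1000000 in
/-- Inexact Krasnosel'skii–Mann iteration: if `T` is nonexpansive with a fixed point,
`β_k ∈ [0,1]`, `∑ β_k (1 - β_k) = ∞`, and `∑ β_k ‖e_k‖ < ∞`, then
`x_{k+1} = x_k + β_k (T x_k + e_k - x_k)` converges to a fixed point of `T`. -/
theorem stmt_11 (m : ℕ) (T : EuclideanSpace ℝ (Fin m) → EuclideanSpace ℝ (Fin m))
    (hT : ∀ x y, ‖T x - T y‖ ≤ ‖x - y‖)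
    (hfixne : ∃ z, T z = z)
    (β : ℕ → ℝ) (hβ0 : ∀ k, 0 ≤ β k) (hβ1 : ∀ k, β k ≤ 1)
    (hβdiv : ¬ Summable (fun k => β k * (1 - β k)))
    (e : ℕ → EuclideanSpace ℝ (Fin m))
    (herr : Summable (fun k => β k * ‖e k‖))
    (x : ℕ → EuclideanSpace ℝ (Fin m))
    (hiter : ∀ k, x (k + 1) = x k + β k • (T (x k) + e k - x k)) :
    ∃ xstar, T xstar = xstar ∧ Filter.Tendsto x Filter.atTop (nhds xstar) := by
  classical
  obtain ⟨z, hz⟩ := hfixne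
  set ε : ℕ → ℝ := fun k => β k * ‖e k‖ with hεdef
  have hε0 : ∀ k, 0 ≤ ε k := fun k => mul_nonneg (hβ0 k) (norm_nonneg _)
  set Etot : ℝ := ∑' k, ε k with hEtot
  have hE0 : 0 ≤ Etot := tsum_nonneg hε0
  have hεleE : ∀ k, ε k ≤ Etot := fun k => Summable.le_tsum herr k fun j _ => hε0 j
  -- norm of smul helpers
  have hnsm : ∀ (c : ℝ), 0 ≤ c → ∀ v : EuclideanSpace ℝ (Fin m), ‖c • v‖ = c * ‖v‖ := by
    intro c hc v
    rw [norm_smul, Real.norm_eq_abs, abs_of_nonneg hc]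
  -- decomposition of iterate
  have hdecomp : ∀ (w : EuclideanSpace ℝ (Fin m)) (k : ℕ),
      x (k + 1) - w = ((1 - β k) • (x k - w) + β k • (T (x k) - w)) + β k • e k := by
    intro w k
    rw [hiter k]
    module
  -- quasi-Fejér step for any fixed point
  have hfej : ∀ w, T w = w → ∀ k, ‖x (k + 1) - w‖ ≤ ‖x k - w‖ + ε k := by
    intro w hw k
    have hTle : ‖T (x k) - w‖ ≤ ‖x k - w‖ := by
      calc ‖T (x k) - w‖ = ‖T (x k) - T w‖ := by rw [hw]
        _ ≤ ‖x k - w‖ := hT _ _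
    calc ‖x (k + 1) - w‖
        = ‖((1 - β k) • (x k - w) + β k • (T (x k) - w)) + β k • e k‖ := by rw [hdecomp w k]
      _ ≤ ‖(1 - β k) • (x k - w)‖ + ‖β k • (T (x k) - w)‖ + ‖β k • e k‖ := norm_add₃_le
      _ = (1 - β k) * ‖x k - w‖ + β k * ‖T (x k) - w‖ + ε k := by
          rw [hnsm _ (by linarith [hβ1 k]) _, hnsm _ (hβ0 k) _, hnsm _ (hβ0 k) _]
      _ ≤ ‖x k - w‖ + ε k := by nlinarith [hβ0 k, hβ1 k]
  -- uniform bound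
  set M : ℝ := ‖x 0 - z‖ + Etot with hMdef
  have hM : ∀ k, ‖x k - z‖ ≤ M := by
    have hpart : ∀ k, ‖x k - z‖ ≤ ‖x 0 - z‖ + ∑ i ∈ Finset.range k, ε i := by
      intro k
      induction k with
      | zero => simp
      | succ n ih =>
          have := hfej z hz n
          rw [Finset.sum_range_succ]
          linarith
    intro k
    have := hpart k
    have hsle : ∑ i ∈ Finset.range k, ε i ≤ Etot :=
      Summable.sum_le_tsum _ (fun j _ => hε0 j) herr
    rw [hMdef]
    linarith
  have hM0 : 0 ≤ M := le_trans (norm_nonneg _) (hM 0)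
  -- key squared inequality
  set r : ℕ → ℝ := fun k => ‖x k - T (x k)‖ with hrdef
  have hr0' : ∀ k, 0 ≤ r k := fun k => norm_nonneg _
  have hkey : ∀ k, ‖x (k + 1) - z‖ ^ 2
      ≤ ‖x k - z‖ ^ 2 - β k * (1 - β k) * r k ^ 2 + (2 * M + Etot) * ε k := by
    intro k
    set u := x k - z with hu
    set v := T (x k) - z with hv
    have hcombo := km_norm_combo (β k) u v
    have huv : u - v = x k - T (x k) := by rw [hu, hv]; abel
    rw [huv] at hcombo
    have hTle : ‖v‖ ≤ ‖u‖ := by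
      calc ‖v‖ = ‖T (x k) - T z‖ := by rw [hv, hz]
        _ ≤ ‖u‖ := hT _ _
    set W := (1 - β k) • u + β k • v with hW
    have hWle : ‖W‖ ≤ ‖u‖ := by
      calc ‖W‖ ≤ ‖(1 - β k) • u‖ + ‖β k • v‖ := norm_add_le _ _
        _ = (1 - β k) * ‖u‖ + β k * ‖v‖ := by
            rw [hnsm _ (by linarith [hβ1 k]) _, hnsm _ (hβ0 k) _]
        _ ≤ ‖u‖ := by nlinarith [hβ0 k, hβ1 k]
    have hstep : ‖x (k + 1) - z‖ ≤ ‖W‖ + ε k := by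
      calc ‖x (k + 1) - z‖ = ‖W + β k • e k‖ := by rw [hdecomp z k]
        _ ≤ ‖W‖ + ‖β k • e k‖ := norm_add_le _ _
        _ = ‖W‖ + ε k := by rw [hnsm _ (hβ0 k) _]
    have hsq : ‖x (k + 1) - z‖ ^ 2 ≤ (‖W‖ + ε k) ^ 2 :=
      pow_le_pow_left₀ (norm_nonneg _) hstep 2
    have huM : ‖u‖ ≤ M := hM k
    have hvsq : ‖v‖ ^ 2 ≤ ‖u‖ ^ 2 := by nlinarith [norm_nonneg v]
    have hexp : (‖W‖ + ε k) ^ 2 = ‖W‖ ^ 2 + 2 * (‖W‖ * ε k) + ε k * ε k := by ring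
    have p1 : β k * ‖v‖ ^ 2 ≤ β k * ‖u‖ ^ 2 := mul_le_mul_of_nonneg_left hvsq (hβ0 k)
    have p2 : ‖W‖ * ε k ≤ M * ε k := mul_le_mul_of_nonneg_right (hWle.trans huM) (hε0 k)
    have p3 : ε k * ε k ≤ Etot * ε k := mul_le_mul_of_nonneg_right (hεleE k) (hε0 k)
    linarith [hsq, hcombo, hexp, p1, p2, p3]
  -- summability of β(1-β) r²
  set g : ℕ → ℝ := fun k => β k * (1 - β k) * r k ^ 2 with hgdef
  have hg0 : ∀ k, 0 ≤ g k :=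
    fun k => mul_nonneg (mul_nonneg (hβ0 k) (by linarith [hβ1 k])) (sq_nonneg _)
  have hgsum : Summable g := by
    apply summable_of_sum_range_le hg0 (c := ‖x 0 - z‖ ^ 2 + (2 * M + Etot) * Etot)
    intro n
    have h1 : ∑ i ∈ Finset.range n, g i
        ≤ ∑ i ∈ Finset.range n,
            ((‖x i - z‖ ^ 2 - ‖x (i + 1) - z‖ ^ 2) + (2 * M + Etot) * ε i) := by
      apply Finset.sum_le_sum
      intro i _
      have := hkey i
      rw [hgdef]
      simp only
      linarith
    rw [Finset.sum_add_distrib, Finset.sum_range_sub' (fun i => ‖x i - z‖ ^ 2) n,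
      ← Finset.mul_sum] at h1
    have h2 : ∑ i ∈ Finset.range n, ε i ≤ Etot := Summable.sum_le_tsum _ (fun j _ => hε0 j) herr
    have h3 : (0:ℝ) ≤ ‖x n - z‖ ^ 2 := sq_nonneg _
    nlinarith [hE0, hM0]
  -- frequently small residual
  have hfreq : ∀ δ : ℝ, 0 < δ → ∀ N : ℕ, ∃ k, N ≤ k ∧ r k < δ := by
    intro δ hδ N
    by_contra hcon
    push_neg at hcon
    apply hβdiv
    rw [← summable_nat_add_iff N]
    apply Summable.of_nonneg_of_le
      (fun k => mul_nonneg (hβ0 _) (by linarith [hβ1 (k + N)]))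
      (fun k => ?_)
      (((summable_nat_add_iff N).mpr hgsum).div_const (δ ^ 2))
    have hr := hcon (k + N) (by omega)
    rw [le_div_iff₀ (pow_pos hδ 2)]
    have h4 : δ ^ 2 ≤ r (k + N) ^ 2 := by nlinarith
    have h5 : 0 ≤ β (k + N) * (1 - β (k + N)) :=
      mul_nonneg (hβ0 _) (by linarith [hβ1 (k + N)])
    have h6 := mul_le_mul_of_nonneg_left h4 h5
    rw [hgdef]
    simp only
    nlinarith [h6]
  -- residual almost decreasing
  have hrmono : ∀ k, r (k + 1) ≤ r k + 2 * ε k := by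
    intro k
    have h1 : x (k + 1) - T (x k) = (1 - β k) • (x k - T (x k)) + β k • e k := by
      rw [hiter k]; module
    have h2 : ‖x (k + 1) - T (x k)‖ ≤ (1 - β k) * r k + ε k := by
      calc ‖x (k + 1) - T (x k)‖
          ≤ ‖(1 - β k) • (x k - T (x k))‖ + ‖β k • e k‖ := by rw [h1]; exact norm_add_le _ _
        _ = (1 - β k) * r k + ε k := by
            rw [hnsm _ (by linarith [hβ1 k]) _, hnsm _ (hβ0 k) _]
    have h3 : ‖T (x k) - T (x (k + 1))‖ ≤ ‖x k - x (k + 1)‖ := hT _ _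
    have h4 : x k - x (k + 1) = -(β k • (T (x k) + e k - x k)) := by rw [hiter k]; module
    have h5 : ‖x k - x (k + 1)‖ ≤ β k * (r k + ‖e k‖) := by
      rw [h4, norm_neg, hnsm _ (hβ0 k) _]
      have : ‖T (x k) + e k - x k‖ ≤ r k + ‖e k‖ := by
        calc ‖T (x k) + e k - x k‖ = ‖(T (x k) - x k) + e k‖ := by congr 1; abel
          _ ≤ ‖T (x k) - x k‖ + ‖e k‖ := norm_add_le _ _
          _ = r k + ‖e k‖ := by rw [norm_sub_rev]
      exact mul_le_mul_of_nonneg_left this (hβ0 k)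
    calc r (k + 1) = ‖(x (k + 1) - T (x k)) + (T (x k) - T (x (k + 1)))‖ := by
          rw [hrdef]; simp only; congr 1; abel
      _ ≤ ‖x (k + 1) - T (x k)‖ + ‖T (x k) - T (x (k + 1))‖ := norm_add_le _ _
      _ ≤ r k + 2 * ε k := by
          have hεk : ε k = β k * ‖e k‖ := rfl
          nlinarith [hβ0 k, norm_nonneg (e k), hr0' k, hεk]
  -- residual converges to 0
  obtain ⟨L, hL⟩ := km_aux_conv r (fun k => 2 * ε k) hr0' (fun k => mul_nonneg (by norm_num) (hε0 k))
    (herr.mul_left 2) hrmono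
  have hL0 : L = 0 := by
    by_contra hne
    have hLpos : 0 < L := by
      rcases (ge_of_tendsto hL (Eventually.of_forall hr0')).lt_or_eq with h | h
      · exact h
      · exact absurd h.symm hne
    have hev : ∀ᶠ k in atTop, L / 2 < r k :=
      hL.eventually (eventually_gt_nhds (by linarith))
    obtain ⟨N, hN⟩ := hev.exists_forall_of_atTop
    obtain ⟨k, hk1, hk2⟩ := hfreq (L / 2) (by linarith) N
    exact absurd (hN k hk1) (not_lt.mpr hk2.le)
  rw [hL0] at hL
  -- extract convergent subsequence
  have hxb : ∀ k, x k ∈ Metric.closedBall z M := by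
    intro k
    rw [Metric.mem_closedBall, dist_eq_norm]
    exact hM k
  obtain ⟨xs, -, φ, hφ, hφconv⟩ :=
    tendsto_subseq_of_bounded Metric.isBounded_closedBall hxb
  -- xs is a fixed point
  have hfix : T xs = xs := by
    have h1 : Tendsto (fun n => x (φ n) - T (x (φ n))) atTop (𝓝 0) := by
      rw [tendsto_zero_iff_norm_tendsto_zero]
      exact hL.comp hφ.tendsto_atTop
    have h2 : Tendsto (fun n => T (x (φ n))) atTop (𝓝 xs) := by
      have h := hφconv.sub h1
      rw [sub_zero] at h
      exact h.congr (fun n => by simp)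
    have hcont : Continuous T := by
      refine (LipschitzWith.of_dist_le_mul (K := 1) (f := T) fun a b => ?_).continuous
      rw [dist_eq_norm, dist_eq_norm, NNReal.coe_one, one_mul]
      exact hT a b
    exact tendsto_nhds_unique ((hcont.tendsto xs).comp hφconv) h2
  -- full convergence to xs
  obtain ⟨L', hL'⟩ := km_aux_conv (fun k => ‖x k - xs‖) ε (fun k => norm_nonneg _) hε0 herr
    (hfej xs hfix)
  have hsub0 : Tendsto (fun n => ‖x (φ n) - xs‖) atTop (𝓝 0) :=
    tendsto_iff_norm_sub_tendsto_zero.mp hφconv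
  have hL'0 : L' = 0 := tendsto_nhds_unique (hL'.comp hφ.tendsto_atTop) hsub0
  refine ⟨xs, hfix, ?_⟩
  rw [tendsto_iff_norm_sub_tendsto_zero]
  rw [hL'0] at hL'
  exact hL'
end

section
/- Let φ : ℝⁿ⁺ᵐ → ℝ be σ-strongly convex and define φₑ(x) = φ(x, Wx + w) for W ∈ ℝⁿˣᵐ, w ∈ ℝⁿ. Then φₑ is σ·σ_min²-strongly convex, where σ_min > 0 is the smallest singular value of the (full column rank) matrix [I; W]. -/
/-- If `φ` is `σ`-strongly convex on the (ℓ²) product space and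
`φₑ x = φ (x, W x + w)`, then `φₑ` is `σ σ_min²`-strongly convex, where `σ_min`
is the smallest singular value of the full column rank matrix `[I; W]`,
characterized by `σ_min ‖x‖ ≤ √(‖x‖² + ‖W x‖²)` with `σ_min ≥ 1`. -/
theorem stmt_14 (m n : ℕ)
    (φ : WithLp 2 (EuclideanSpace ℝ (Fin m) × EuclideanSpace ℝ (Fin n)) → ℝ)
    (W : EuclideanSpace ℝ (Fin m) →L[ℝ] EuclideanSpace ℝ (Fin n))
    (w : EuclideanSpace ℝ (Fin n))
    (σ σmin : ℝ) (hσ : 0 < σ) (hσmin1 : 1 ≤ σmin)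
    (hsing : ∀ x : EuclideanSpace ℝ (Fin m),
      σmin * ‖x‖ ≤ Real.sqrt (‖x‖ ^ 2 + ‖W x‖ ^ 2))
    (hsing' : ∃ x : EuclideanSpace ℝ (Fin m), x ≠ 0 ∧
      σmin * ‖x‖ = Real.sqrt (‖x‖ ^ 2 + ‖W x‖ ^ 2))
    (hφ : StrongConvexOn Set.univ σ φ) :
    StrongConvexOn Set.univ (σ * σmin ^ 2)
      (fun x : EuclideanSpace ℝ (Fin m) =>
        φ ((WithLp.equiv 2 (EuclideanSpace ℝ (Fin m) × EuclideanSpace ℝ (Fin n))).symm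
            (x, W x + w))) := by
  obtain ⟨-, H⟩ := hφ
  refine ⟨convex_univ, ?_⟩
  intro x _ y _ a b ha hb hab
  set e := (WithLp.equiv 2 (EuclideanSpace ℝ (Fin m) × EuclideanSpace ℝ (Fin n))).symm
  have key := H (Set.mem_univ (e (x, W x + w))) (Set.mem_univ (e (y, W y + w))) ha hb hab
  have hcomb : a • e (x, W x + w) + b • e (y, W y + w)
      = e (a • x + b • y, W (a • x + b • y) + w) := by
    apply (WithLp.equiv 2 _).injective
    refine Prod.ext ?_ ?_
    · ext i; simp [e, ← add_smul, hab]
    · ext i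
      simp [e]
      linear_combination w i * hab
  have hdiff : e (x, W x + w) - e (y, W y + w) = e (x - y, W (x - y)) := by
    apply (WithLp.equiv 2 _).injective
    ext <;> simp [e, map_sub]
  have hnorm : σmin * ‖x - y‖ ≤ ‖e (x, W x + w) - e (y, W y + w)‖ := by
    rw [hdiff, WithLp.prod_norm_eq_of_L2]
    exact hsing (x - y)
  have hsq : σmin ^ 2 * ‖x - y‖ ^ 2 ≤ ‖e (x, W x + w) - e (y, W y + w)‖ ^ 2 := by
    have h0 : 0 ≤ σmin * ‖x - y‖ := by positivity
    nlinarith [norm_nonneg (e (x, W x + w) - e (y, W y + w))]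
  rw [hcomb] at key
  refine key.trans ?_
  have hab' : 0 ≤ a * b := mul_nonneg ha hb
  simp only [smul_eq_mul]
  nlinarith [mul_le_mul_of_nonneg_left hsq (le_of_lt (half_pos hσ))]
end
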